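/- arXiv:2605.23181 — 2 statements merged into one kernel-verified Lean document; each statement's English description precedes it below -/
import Mathlib

section
/- For the Hirota–Satsuma coupled KdV system u_t = a(u_xxx + 6uu_x) + 2b v v_x, v_t = −v_xxx − 3u v_x with periodic boundary conditions, any sufficiently smooth periodic solution conserves the energy E(t) = ∫ₐᵇ ( u² + (2/3) b v² ) dx, i.e. dE/dt = 0. -/
open MeasureTheory intervalIntegral Metric Set

/-- Differentiation under the interval integral for a jointly smooth integrand. -/
lemma hskdv_aux_param (xL xR : ℝ) (f : ℝ → ℝ → ℝ)
    (hf : ContDiff ℝ (⊤ : ℕ∞) (fun p : ℝ × ℝ => f p.1 p.2)) (t₀ : ℝ) :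
    HasDerivAt (fun s => ∫ x in xL..xR, f x s)
      (∫ x in xL..xR, deriv (fun s => f x s) t₀) t₀ := by
  set F : ℝ × ℝ → ℝ := fun p => f p.1 p.2 with hFdef
  have hdF : ∀ x t, HasDerivAt (fun s => f x s) (fderiv ℝ F (x, t) (0, 1)) t := by
    intro x t
    exact ((hf.differentiable (by simp) (x, t)).hasFDerivAt).comp_hasDerivAt t
      ((hasDerivAt_const t x).prodMk (hasDerivAt_id t))
  have hderiv_eq : ∀ x t, deriv (fun s => f x s) t = fderiv ℝ F (x, t) (0, 1) :=
    fun x t => ((hdF x t).deriv).symm.symm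
  have hcont : Continuous fun p : ℝ × ℝ => fderiv ℝ F p (0, 1) :=
    (hf.continuous_fderiv (by simp)).clm_apply continuous_const
  obtain ⟨C, hC⟩ :=
    ((isCompact_uIcc (a := xL) (b := xR)).prod (isCompact_closedBall t₀ 1)).exists_bound_of_continuousOn
      hcont.continuousOn
  have hcontf : Continuous F := hf.continuous
  have key := intervalIntegral.hasDerivAt_integral_of_dominated_loc_of_deriv_le
    (F := fun s x => f x s) (F' := fun s x => fderiv ℝ F (x, s) (0, 1))
    (x₀ := t₀) (a := xL) (b := xR) (μ := volume) (bound := fun _ => |C| + 1)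
    (s := ball t₀ 1) (ball_mem_nhds t₀ one_pos)
    (Filter.Eventually.of_forall fun s =>
      ((hcontf.comp (continuous_id.prodMk continuous_const)).aestronglyMeasurable))
    ((hcontf.comp (continuous_id.prodMk continuous_const)).intervalIntegrable xL xR)
    ((hcont.comp (continuous_id.prodMk continuous_const)).aestronglyMeasurable)
    ?_ (intervalIntegrable_const) ?_
  · have h2 : (∫ x in xL..xR, fderiv ℝ F (x, t₀) (0, 1))
        = ∫ x in xL..xR, deriv (fun s => f x s) t₀ := by
      refine intervalIntegral.integral_congr fun x _ => (hderiv_eq x t₀).symm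
    rw [← h2]
    exact key.2
  · refine Filter.Eventually.of_forall fun x hx s hs => ?_
    have h1 : (x, s) ∈ (uIcc xL xR) ×ˢ closedBall t₀ 1 :=
      ⟨uIoc_subset_uIcc hx, ball_subset_closedBall hs⟩
    calc ‖fderiv ℝ F (x, s) (0, 1)‖ ≤ C := hC _ h1
      _ ≤ |C| + 1 := by
          have := le_abs_self C; linarith
  · exact Filter.Eventually.of_forall fun x _ s _ => hdF x s

/-- Energy conservation ∫ (u² + (2/3) b v²) dx for smooth periodic solutions of the Hirota–Satsuma
coupled KdV system. -/
theorem hskdv_energy_conservation (xL xR a b : ℝ) (hx : xL < xR)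
    (u v : ℝ → ℝ → ℝ)
    (husmooth : ContDiff ℝ (⊤ : ℕ∞) (fun p : ℝ × ℝ => u p.1 p.2))
    (hvsmooth : ContDiff ℝ (⊤ : ℕ∞) (fun p : ℝ × ℝ => v p.1 p.2))
    (huper0 : ∀ t, u xL t = u xR t)
    (huper1 : ∀ t, deriv (fun y => u y t) xL = deriv (fun y => u y t) xR)
    (huper2 : ∀ t, iteratedDeriv 2 (fun y => u y t) xL = iteratedDeriv 2 (fun y => u y t) xR)
    (hvper0 : ∀ t, v xL t = v xR t)
    (hvper1 : ∀ t, deriv (fun y => v y t) xL = deriv (fun y => v y t) xR)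
    (hvper2 : ∀ t, iteratedDeriv 2 (fun y => v y t) xL = iteratedDeriv 2 (fun y => v y t) xR)
    (hpdeu : ∀ x t,
      deriv (fun s => u x s) t
        = a * (iteratedDeriv 3 (fun y => u y t) x + 6 * u x t * deriv (fun y => u y t) x)
          + 2 * b * v x t * deriv (fun y => v y t) x)
    (hpdev : ∀ x t,
      deriv (fun s => v x s) t
        = -(iteratedDeriv 3 (fun y => v y t) x) - 3 * u x t * deriv (fun y => v y t) x) :
    ∀ t, deriv (fun s => ∫ x in xL..xR, (u x s) ^ 2 + (2 / 3) * b * (v x s) ^ 2) t = 0 := by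
  intro t
  -- joint smoothness of the integrand
  have hfsmooth : ContDiff ℝ (⊤ : ℕ∞)
      (fun p : ℝ × ℝ => (u p.1 p.2) ^ 2 + (2 / 3) * b * (v p.1 p.2) ^ 2) :=
    (husmooth.pow 2).add (contDiff_const.mul (hvsmooth.pow 2))
  have hmain := hskdv_aux_param xL xR
    (fun x s => (u x s) ^ 2 + (2 / 3) * b * (v x s) ^ 2) hfsmooth t
  rw [hmain.deriv]
  -- fixed-time slices
  set U : ℝ → ℝ := fun y => u y t with hUdef
  set V : ℝ → ℝ := fun y => v y t with hVdef
  have hU : ContDiff ℝ (⊤ : ℕ∞) U := husmooth.comp (contDiff_id.prodMk contDiff_const)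
  have hV : ContDiff ℝ (⊤ : ℕ∞) V := hvsmooth.comp (contDiff_id.prodMk contDiff_const)
  have hU' : ContDiff ℝ ((⊤ : ℕ∞) : WithTop ℕ∞) U := hU.of_le (by simp)
  have hV' : ContDiff ℝ ((⊤ : ℕ∞) : WithTop ℕ∞) V := hV.of_le (by simp)
  have hU1 : ContDiff ℝ ((⊤ : ℕ∞) : WithTop ℕ∞) (deriv U) := (contDiff_infty_iff_deriv.mp hU').2
  have hV1 : ContDiff ℝ ((⊤ : ℕ∞) : WithTop ℕ∞) (deriv V) := (contDiff_infty_iff_deriv.mp hV').2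
  have hU2 : ContDiff ℝ ((⊤ : ℕ∞) : WithTop ℕ∞) (deriv (deriv U)) := (contDiff_infty_iff_deriv.mp hU1).2
  have hV2 : ContDiff ℝ ((⊤ : ℕ∞) : WithTop ℕ∞) (deriv (deriv V)) := (contDiff_infty_iff_deriv.mp hV1).2
  have hUit2 : ∀ y, iteratedDeriv 2 U y = deriv (deriv U) y := by
    intro y; simp [iteratedDeriv_succ, iteratedDeriv_zero]
  have hVit2 : ∀ y, iteratedDeriv 2 V y = deriv (deriv V) y := by
    intro y; simp [iteratedDeriv_succ, iteratedDeriv_zero]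
  have hUit3 : ∀ y, iteratedDeriv 3 U y = deriv (deriv (deriv U)) y := by
    intro y; simp [iteratedDeriv_succ, iteratedDeriv_zero]
  have hVit3 : ∀ y, iteratedDeriv 3 V y = deriv (deriv (deriv V)) y := by
    intro y; simp [iteratedDeriv_succ, iteratedDeriv_zero]
  -- antiderivative in x
  set G : ℝ → ℝ := fun y =>
    a * (2 * U y * deriv (deriv U) y - (deriv U y) ^ 2 + 4 * (U y) ^ 3)
      - (4 / 3) * b * (V y * deriv (deriv V) y - (deriv V y) ^ 2 / 2) with hGdef
  have hGd : ∀ y, HasDerivAt G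
      (a * (2 * U y * deriv (deriv (deriv U)) y + 12 * (U y) ^ 2 * deriv U y)
        - (4 / 3) * b * (V y * deriv (deriv (deriv V)) y)) y := by
    intro y
    have dU : HasDerivAt U (deriv U y) y := (hU.differentiable (by simp) y).hasDerivAt
    have dU1 : HasDerivAt (deriv U) (deriv (deriv U) y) y :=
      (hU1.differentiable (by simp) y).hasDerivAt
    have dU2 : HasDerivAt (deriv (deriv U)) (deriv (deriv (deriv U)) y) y :=
      (hU2.differentiable (by simp) y).hasDerivAt
    have dV : HasDerivAt V (deriv V y) y := (hV.differentiable (by simp) y).hasDerivAt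
    have dV1 : HasDerivAt (deriv V) (deriv (deriv V) y) y :=
      (hV1.differentiable (by simp) y).hasDerivAt
    have dV2 : HasDerivAt (deriv (deriv V)) (deriv (deriv (deriv V)) y) y :=
      (hV2.differentiable (by simp) y).hasDerivAt
    have h1 : HasDerivAt (fun y => 2 * U y * deriv (deriv U) y - (deriv U y) ^ 2 + 4 * (U y) ^ 3)
        (2 * deriv U y * deriv (deriv U) y + 2 * U y * deriv (deriv (deriv U)) y
          - 2 * deriv U y * deriv (deriv U) y + 12 * (U y) ^ 2 * deriv U y) y := by
      have := (((dU.const_mul 2).mul dU2).sub (dU1.fun_pow 2)).add ((dU.fun_pow 3).const_mul 4)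
      refine this.congr_deriv ?_
      push_cast
      ring
    have h2 : HasDerivAt (fun y => V y * deriv (deriv V) y - (deriv V y) ^ 2 / 2)
        (deriv V y * deriv (deriv V) y + V y * deriv (deriv (deriv V)) y
          - deriv V y * deriv (deriv V) y) y := by
      have := (dV.mul dV2).sub ((dV1.fun_pow 2).div_const 2)
      refine this.congr_deriv ?_
      push_cast
      ring
    have := (h1.const_mul a).sub (h2.const_mul ((4 : ℝ) / 3 * b))
    refine this.congr_deriv ?_
    ring
  -- the time derivative of the integrand equals G'
  have hpt : ∀ x, deriv (fun s => (u x s) ^ 2 + (2 / 3) * b * (v x s) ^ 2) t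
      = a * (2 * U x * deriv (deriv (deriv U)) x + 12 * (U x) ^ 2 * deriv U x)
        - (4 / 3) * b * (V x * deriv (deriv (deriv V)) x) := by
    intro x
    have hudiff : DifferentiableAt ℝ (fun s => u x s) t :=
      (husmooth.differentiable (by simp)).comp (differentiable_const x |>.prodMk differentiable_id) t
    have hvdiff : DifferentiableAt ℝ (fun s => v x s) t :=
      (hvsmooth.differentiable (by simp)).comp (differentiable_const x |>.prodMk differentiable_id) t
    have hut : HasDerivAt (fun s => u x s) (deriv (fun s => u x s) t) t :=
      hudiff.hasDerivAt
    have hvt : HasDerivAt (fun s => v x s) (deriv (fun s => v x s) t) t :=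
      hvdiff.hasDerivAt
    have hsum : HasDerivAt (fun s => (u x s) ^ 2 + (2 / 3) * b * (v x s) ^ 2)
        (2 * u x t * deriv (fun s => u x s) t
          + (2 / 3) * b * (2 * v x t * deriv (fun s => v x s) t)) t := by
      have := (hut.fun_pow 2).add ((hvt.fun_pow 2).const_mul ((2 : ℝ) / 3 * b))
      refine this.congr_deriv ?_
      ring
    rw [hsum.deriv, hpdeu x t, hpdev x t]
    have e1 : iteratedDeriv 3 (fun y => u y t) x = deriv (deriv (deriv U)) x := hUit3 x
    have e2 : iteratedDeriv 3 (fun y => v y t) x = deriv (deriv (deriv V)) x := hVit3 x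
    have e3 : deriv (fun y => u y t) x = deriv U x := rfl
    have e4 : deriv (fun y => v y t) x = deriv V x := rfl
    rw [e1, e2, e3, e4]
    show 2 * U x * (a * (deriv (deriv (deriv U)) x + 6 * U x * deriv U x)
        + 2 * b * V x * deriv V x)
      + 2 / 3 * b * (2 * V x * (-(deriv (deriv (deriv V)) x) - 3 * U x * deriv V x)) = _
    ring
  -- rewrite the integral and apply FTC
  have hint : (∫ x in xL..xR, deriv (fun s => (u x s) ^ 2 + (2 / 3) * b * (v x s) ^ 2) t)
      = ∫ x in xL..xR,
        (a * (2 * U x * deriv (deriv (deriv U)) x + 12 * (U x) ^ 2 * deriv U x)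
          - (4 / 3) * b * (V x * deriv (deriv (deriv V)) x)) :=
    intervalIntegral.integral_congr fun x _ => hpt x
  rw [hint]
  have hcontG' : Continuous fun y =>
      a * (2 * U y * deriv (deriv (deriv U)) y + 12 * (U y) ^ 2 * deriv U y)
        - (4 / 3) * b * (V y * deriv (deriv (deriv V)) y) := by
    have cU := hU.continuous
    have cU1 := hU1.continuous
    have cU3 := (contDiff_infty_iff_deriv.mp hU2).2.continuous
    have cV := hV.continuous
    have cV3 := (contDiff_infty_iff_deriv.mp hV2).2.continuous
    fun_prop
  rw [intervalIntegral.integral_eq_sub_of_hasDerivAt (fun y _ => hGd y)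
    (hcontG'.intervalIntegrable xL xR)]
  -- periodicity gives G xR = G xL
  have hGeq : G xR = G xL := by
    simp only [hGdef]
    rw [show U xR = U xL from (huper0 t).symm,
      show deriv U xR = deriv U xL from (huper1 t).symm,
      show V xR = V xL from (hvper0 t).symm,
      show deriv V xR = deriv V xL from (hvper1 t).symm,
      show deriv (deriv U) xR = deriv (deriv U) xL by
        rw [← hUit2, ← hUit2]; exact (huper2 t).symm,
      show deriv (deriv V) xR = deriv (deriv V) xL by
        rw [← hVit2, ← hVit2]; exact (hvper2 t).symm]
  rw [hGeq, sub_self]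
end

section
/- For the Hirota–Satsuma coupled KdV system u_t = a(u_xxx + 6uu_x) + 2b v v_x, v_t = −v_xxx − 3u v_x with periodic boundary conditions, any sufficiently smooth periodic solution conserves the Hamiltonian H(t) = ∫ₐᵇ ( (1+a)(u³ − ½u_x²) + b(u v² − v_x²) ) dx, i.e. dH/dt = 0. -/
open MeasureTheory intervalIntegral Set Metric

noncomputable def hsPX (W : ℝ × ℝ → ℝ) : ℝ × ℝ → ℝ := fun p => fderiv ℝ W p (1, 0)
noncomputable def hsPT (W : ℝ × ℝ → ℝ) : ℝ × ℝ → ℝ := fun p => fderiv ℝ W p (0, 1)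

lemma hsPX_contDiff {W : ℝ × ℝ → ℝ} (hW : ContDiff ℝ (⊤ : ℕ∞) W) : ContDiff ℝ (⊤ : ℕ∞) (hsPX W) :=
  (hW.fderiv_right (by simp)).clm_apply contDiff_const

lemma hsPT_contDiff {W : ℝ × ℝ → ℝ} (hW : ContDiff ℝ (⊤ : ℕ∞) W) : ContDiff ℝ (⊤ : ℕ∞) (hsPT W) :=
  (hW.fderiv_right (by simp)).clm_apply contDiff_const

lemma hsSliceX {W : ℝ × ℝ → ℝ} (hW : ContDiff ℝ (⊤ : ℕ∞) W) (x t : ℝ) :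
    HasDerivAt (fun y => W (y, t)) (hsPX W (x, t)) x := by
  have h1 : HasFDerivAt W (fderiv ℝ W (x, t)) (x, t) :=
    (hW.differentiable (by simp) (x, t)).hasFDerivAt
  have h2 : HasDerivAt (fun y : ℝ => (y, t)) ((1 : ℝ), (0 : ℝ)) x :=
    (hasDerivAt_id x).prodMk (hasDerivAt_const x t)
  exact h1.comp_hasDerivAt x h2

lemma hsSliceT {W : ℝ × ℝ → ℝ} (hW : ContDiff ℝ (⊤ : ℕ∞) W) (x t : ℝ) :
    HasDerivAt (fun s => W (x, s)) (hsPT W (x, t)) t := by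
  have h1 : HasFDerivAt W (fderiv ℝ W (x, t)) (x, t) :=
    (hW.differentiable (by simp) (x, t)).hasFDerivAt
  have h2 : HasDerivAt (fun s : ℝ => (x, s)) ((0 : ℝ), (1 : ℝ)) t :=
    (hasDerivAt_const t x).prodMk (hasDerivAt_id t)
  exact h1.comp_hasDerivAt t h2

lemma hsDeriv2 {W : ℝ × ℝ → ℝ} (hW : ContDiff ℝ (⊤ : ℕ∞) W) (x t : ℝ) :
    iteratedDeriv 2 (fun y => W (y, t)) x = hsPX (hsPX W) (x, t) := by
  rw [iteratedDeriv_succ, iteratedDeriv_one]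
  have h : deriv (fun y => W (y, t)) = fun y => hsPX W (y, t) :=
    funext fun y => (hsSliceX hW y t).deriv
  rw [h]
  exact (hsSliceX (hsPX_contDiff hW) x t).deriv

lemma hsDeriv3 {W : ℝ × ℝ → ℝ} (hW : ContDiff ℝ (⊤ : ℕ∞) W) (x t : ℝ) :
    iteratedDeriv 3 (fun y => W (y, t)) x = hsPX (hsPX (hsPX W)) (x, t) := by
  rw [iteratedDeriv_succ]
  have h : iteratedDeriv 2 (fun y => W (y, t)) = fun y => hsPX (hsPX W) (y, t) :=
    funext fun y => hsDeriv2 hW y t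
  rw [h]
  exact (hsSliceX (hsPX_contDiff (hsPX_contDiff hW)) x t).deriv

lemma hsClairaut {W : ℝ × ℝ → ℝ} (hW : ContDiff ℝ (⊤ : ℕ∞) W) (p : ℝ × ℝ) :
    hsPT (hsPX W) p = hsPX (hsPT W) p := by
  have hd : ContDiff ℝ (⊤ : ℕ∞) (fderiv ℝ W) := hW.fderiv_right (by simp)
  have hf'' : HasFDerivAt (fderiv ℝ W) (fderiv ℝ (fderiv ℝ W) p) p :=
    (hd.differentiable (by simp) p).hasFDerivAt
  have hsym := second_derivative_symmetric
    (fun y => (hW.differentiable (by simp) y).hasFDerivAt) hf''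
  have hx : ∀ i : ℝ × ℝ, HasFDerivAt (fun q => fderiv ℝ W q i)
      ((ContinuousLinearMap.apply ℝ ℝ i).comp (fderiv ℝ (fderiv ℝ W) p)) p :=
    fun i => (ContinuousLinearMap.apply ℝ ℝ i).hasFDerivAt.comp p hf''
  have e1 : fderiv ℝ (hsPX W) p
      = (ContinuousLinearMap.apply ℝ ℝ ((1 : ℝ), (0 : ℝ))).comp (fderiv ℝ (fderiv ℝ W) p) :=
    (hx (1, 0)).fderiv
  have e2 : fderiv ℝ (hsPT W) p
      = (ContinuousLinearMap.apply ℝ ℝ ((0 : ℝ), (1 : ℝ))).comp (fderiv ℝ (fderiv ℝ W) p) :=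
    (hx (0, 1)).fderiv
  show fderiv ℝ (hsPX W) p (0, 1) = fderiv ℝ (hsPT W) p (1, 0)
  rw [e1, e2]
  simpa using hsym (0, 1) (1, 0)

lemma hsParamDeriv (F : ℝ × ℝ → ℝ) (hF : ContDiff ℝ (⊤ : ℕ∞) F) (xL xR t : ℝ) :
    HasDerivAt (fun s => ∫ x in xL..xR, F (x, s)) (∫ x in xL..xR, hsPT F (x, t)) t := by
  have hFc : Continuous F := hF.continuous
  have hptF : Continuous (hsPT F) := (hsPT_contDiff hF).continuous
  obtain ⟨C, hC⟩ : ∃ C, ∀ p ∈ (uIcc xL xR) ×ˢ (Icc (t - 1) (t + 1)), ‖hsPT F p‖ ≤ C :=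
    (isCompact_uIcc.prod isCompact_Icc).exists_bound_of_continuousOn hptF.continuousOn
  refine (intervalIntegral.hasDerivAt_integral_of_dominated_loc_of_deriv_le
    (F := fun s x => F (x, s)) (F' := fun s x => hsPT F (x, s)) (bound := fun _ => C)
    (Metric.ball_mem_nhds t one_pos) ?_ ?_ ?_ ?_ ?_ ?_).2
  · exact Filter.Eventually.of_forall fun s =>
      (hFc.comp (continuous_id.prodMk continuous_const)).aestronglyMeasurable
  · exact (hFc.comp (continuous_id.prodMk continuous_const)).intervalIntegrable _ _
  · exact (hptF.comp (continuous_id.prodMk continuous_const)).aestronglyMeasurable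
  · refine ae_of_all _ fun x hx s hs => hC (x, s) ⟨Set.Ioc_subset_Icc_self hx, ?_⟩
    rw [Real.ball_eq_Ioo] at hs
    exact Set.Ioo_subset_Icc_self hs
  · exact intervalIntegrable_const
  · exact ae_of_all _ fun x _ s _ => hsSliceT hF x s

theorem hskdv_aux (xL xR a b : ℝ) (U V : ℝ × ℝ → ℝ)
    (hU : ContDiff ℝ (⊤ : ℕ∞) U) (hV : ContDiff ℝ (⊤ : ℕ∞) V)
    (hU0 : ∀ t, U (xL, t) = U (xR, t))
    (hU1 : ∀ t, hsPX U (xL, t) = hsPX U (xR, t))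
    (hU2 : ∀ t, hsPX (hsPX U) (xL, t) = hsPX (hsPX U) (xR, t))
    (hUt : ∀ t, hsPT U (xL, t) = hsPT U (xR, t))
    (hV0 : ∀ t, V (xL, t) = V (xR, t))
    (hV1 : ∀ t, hsPX V (xL, t) = hsPX V (xR, t))
    (hV2 : ∀ t, hsPX (hsPX V) (xL, t) = hsPX (hsPX V) (xR, t))
    (hVt : ∀ t, hsPT V (xL, t) = hsPT V (xR, t))
    (pdeU : ∀ p : ℝ × ℝ, hsPT U p
      = a * (hsPX (hsPX (hsPX U)) p + 6 * U p * hsPX U p) + 2 * b * V p * hsPX V p)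
    (pdeV : ∀ p : ℝ × ℝ, hsPT V p
      = -(hsPX (hsPX (hsPX V)) p) - 3 * U p * hsPX V p) :
    ∀ t, HasDerivAt (fun s => ∫ x in xL..xR,
      (1 + a) * ((U (x, s)) ^ 3 - (1 / 2) * (hsPX U (x, s)) ^ 2)
        + b * (U (x, s) * (V (x, s)) ^ 2 - (hsPX V (x, s)) ^ 2)) 0 t := by
  intro t
  have hUx : ContDiff ℝ (⊤ : ℕ∞) (hsPX U) := hsPX_contDiff hU
  have hUxx : ContDiff ℝ (⊤ : ℕ∞) (hsPX (hsPX U)) := hsPX_contDiff hUx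
  have hUt' : ContDiff ℝ (⊤ : ℕ∞) (hsPT U) := hsPT_contDiff hU
  have hVx : ContDiff ℝ (⊤ : ℕ∞) (hsPX V) := hsPX_contDiff hV
  have hVxx : ContDiff ℝ (⊤ : ℕ∞) (hsPX (hsPX V)) := hsPX_contDiff hVx
  have hVt' : ContDiff ℝ (⊤ : ℕ∞) (hsPT V) := hsPT_contDiff hV
  set F : ℝ × ℝ → ℝ := fun p =>
    (1 + a) * ((U p) ^ 3 - (1 / 2) * (hsPX U p) ^ 2)
      + b * (U p * (V p) ^ 2 - (hsPX V p) ^ 2) with hFdef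
  set G : ℝ × ℝ → ℝ := fun p =>
    (a * (1 + a) * (1 / 2)) * (3 * (U p) ^ 2 + hsPX (hsPX U) p) ^ 2
      + (b * b * (1 / 2)) * (V p) ^ 4
      + (3 * a * b) * ((U p) ^ 2 * (V p) ^ 2)
      + (a * b) * (hsPX (hsPX U) p * (V p) ^ 2)
      - b * (hsPX (hsPX V) p) ^ 2
      + (2 * b) * (hsPX U p * (V p * hsPX V p))
      - (2 * b) * (U p * (V p * hsPX (hsPX V) p))
      - (2 * b) * (U p * (hsPX V p) ^ 2)
      - (1 + a) * (hsPX U p * hsPT U p)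
      - (2 * b) * (hsPX V p * hsPT V p) with hGdef
  have hFs : ContDiff ℝ (⊤ : ℕ∞) F :=
    ((contDiff_const.mul ((hU.pow 3).sub (contDiff_const.mul (hUx.pow 2))))).add
      (contDiff_const.mul ((hU.mul (hV.pow 2)).sub (hVx.pow 2)))
  have hGs : ContDiff ℝ (⊤ : ℕ∞) G := by
    refine ContDiff.sub (ContDiff.sub (ContDiff.sub (ContDiff.add (ContDiff.sub
      (ContDiff.add (ContDiff.add (ContDiff.add ?_ ?_) ?_) ?_) ?_) ?_) ?_) ?_) ?_ |>.sub ?_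
    · exact contDiff_const.mul (((contDiff_const.mul (hU.pow 2)).add hUxx).pow 2)
    · exact contDiff_const.mul (hV.pow 4)
    · exact contDiff_const.mul ((hU.pow 2).mul (hV.pow 2))
    · exact contDiff_const.mul (hUxx.mul (hV.pow 2))
    · exact contDiff_const.mul (hVxx.pow 2)
    · exact contDiff_const.mul (hUx.mul (hV.mul hVx))
    · exact contDiff_const.mul (hU.mul (hV.mul hVxx))
    · exact contDiff_const.mul (hU.mul (hVx.pow 2))
    · exact contDiff_const.mul (hUx.mul hUt')
    · exact contDiff_const.mul (hVx.mul hVt')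
  have h1 : HasDerivAt (fun s => ∫ x in xL..xR, F (x, s))
      (∫ x in xL..xR, hsPT F (x, t)) t := hsParamDeriv F hFs xL xR t
  have hpoint : ∀ x : ℝ, hsPT F (x, t) = hsPX G (x, t) := by
    intro x
    have hu := hsSliceT hU x t
    have hux := hsSliceT hUx x t
    have hv := hsSliceT hV x t
    have hvx := hsSliceT hVx x t
    have hD := (((hu.pow 3).sub ((hux.pow 2).const_mul (1 / 2))).const_mul (1 + a)).add
      (((hu.mul (hv.pow 2)).sub (hvx.pow 2)).const_mul b)
    have e1 := (hsSliceT hFs x t).unique hD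
    have gu := hsSliceX hU x t
    have gux := hsSliceX hUx x t
    have guxx := hsSliceX hUxx x t
    have gut := hsSliceX hUt' x t
    have gv := hsSliceX hV x t
    have gvx := hsSliceX hVx x t
    have gvxx := hsSliceX hVxx x t
    have gvt := hsSliceX hVt' x t
    have c1 := ((((gu.pow 2).const_mul 3).add guxx).pow 2).const_mul (a * (1 + a) * (1 / 2))
    have c2 := (gv.pow 4).const_mul (b * b * (1 / 2))
    have c3 := (((gu.pow 2).mul (gv.pow 2))).const_mul (3 * a * b)
    have c4 := ((guxx.mul (gv.pow 2))).const_mul (a * b)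
    have c5 := (gvxx.pow 2).const_mul b
    have c6 := ((gux.mul (gv.mul gvx))).const_mul (2 * b)
    have c7 := ((gu.mul (gv.mul gvxx))).const_mul (2 * b)
    have c8 := ((gu.mul (gvx.pow 2))).const_mul (2 * b)
    have c9 := ((gux.mul gut)).const_mul (1 + a)
    have c10 := ((gvx.mul gvt)).const_mul (2 * b)
    have hE := (((((((((c1.add c2).add c3).add c4).sub c5).add c6).sub c7).sub c8).sub
      c9).sub c10)
    have e2 := (hsSliceX hGs x t).unique hE
    rw [e1, e2, hsClairaut hU (x, t), hsClairaut hV (x, t), pdeU (x, t), pdeV (x, t)]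
    push_cast
    simp only [Pi.pow_apply, Pi.mul_apply, Pi.add_apply, Pi.sub_apply]
    ring
  have h2 : (∫ x in xL..xR, hsPT F (x, t)) = (∫ x in xL..xR, hsPX G (x, t)) :=
    intervalIntegral.integral_congr fun x _ => hpoint x
  have h3 : (∫ x in xL..xR, hsPX G (x, t)) = G (xR, t) - G (xL, t) :=
    integral_eq_sub_of_hasDerivAt (fun x _ => hsSliceX hGs x t)
      (((hsPX_contDiff hGs).continuous.comp
        (continuous_id.prodMk continuous_const)).intervalIntegrable _ _)
  have h4 : G (xR, t) - G (xL, t) = 0 := by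
    rw [hGdef]
    simp only [hU0 t, hU1 t, hU2 t, hUt t, hV0 t, hV1 t, hV2 t, hVt t]
    ring
  have h5 : (∫ x in xL..xR, hsPT F (x, t)) = 0 := by rw [h2, h3, h4]
  rw [h5] at h1
  exact h1

/-- Hamiltonian conservation ∫ ((1+a)(u³ − ½u_x²) + b(u v² − v_x²)) dx for smooth periodic solutions of the Hirota–Satsuma
coupled KdV system. -/
theorem hskdv_hamiltonian_conservation (xL xR a b : ℝ) (hx : xL < xR)
    (u v : ℝ → ℝ → ℝ)
    (husmooth : ContDiff ℝ (⊤ : ℕ∞) (fun p : ℝ × ℝ => u p.1 p.2))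
    (hvsmooth : ContDiff ℝ (⊤ : ℕ∞) (fun p : ℝ × ℝ => v p.1 p.2))
    (huper0 : ∀ t, u xL t = u xR t)
    (huper1 : ∀ t, deriv (fun y => u y t) xL = deriv (fun y => u y t) xR)
    (huper2 : ∀ t, iteratedDeriv 2 (fun y => u y t) xL = iteratedDeriv 2 (fun y => u y t) xR)
    (hvper0 : ∀ t, v xL t = v xR t)
    (hvper1 : ∀ t, deriv (fun y => v y t) xL = deriv (fun y => v y t) xR)
    (hvper2 : ∀ t, iteratedDeriv 2 (fun y => v y t) xL = iteratedDeriv 2 (fun y => v y t) xR)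
    (hpdeu : ∀ x t,
      deriv (fun s => u x s) t
        = a * (iteratedDeriv 3 (fun y => u y t) x + 6 * u x t * deriv (fun y => u y t) x)
          + 2 * b * v x t * deriv (fun y => v y t) x)
    (hpdev : ∀ x t,
      deriv (fun s => v x s) t
        = -(iteratedDeriv 3 (fun y => v y t) x) - 3 * u x t * deriv (fun y => v y t) x) :
    ∀ t, deriv (fun s => ∫ x in xL..xR, (1 + a) * ((u x s) ^ 3 - (1 / 2) * (deriv (fun y => u y s) x) ^ 2) + b * (u x s * (v x s) ^ 2 - (deriv (fun y => v y s) x) ^ 2)) t = 0 := by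
  intro t
  set Uf : ℝ × ℝ → ℝ := fun p => u p.1 p.2 with hUfdef
  set Vf : ℝ × ℝ → ℝ := fun p => v p.1 p.2 with hVfdef
  have key_u : ∀ s x, deriv (fun y => u y s) x = hsPX Uf (x, s) :=
    fun s x => (hsSliceX husmooth x s).deriv
  have key_v : ∀ s x, deriv (fun y => v y s) x = hsPX Vf (x, s) :=
    fun s x => (hsSliceX hvsmooth x s).deriv
  have key_u2 : ∀ s x, iteratedDeriv 2 (fun y => u y s) x = hsPX (hsPX Uf) (x, s) :=
    fun s x => hsDeriv2 husmooth x s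
  have key_v2 : ∀ s x, iteratedDeriv 2 (fun y => v y s) x = hsPX (hsPX Vf) (x, s) :=
    fun s x => hsDeriv2 hvsmooth x s
  have key_u3 : ∀ s x, iteratedDeriv 3 (fun y => u y s) x = hsPX (hsPX (hsPX Uf)) (x, s) :=
    fun s x => hsDeriv3 husmooth x s
  have key_v3 : ∀ s x, iteratedDeriv 3 (fun y => v y s) x = hsPX (hsPX (hsPX Vf)) (x, s) :=
    fun s x => hsDeriv3 hvsmooth x s
  have key_ut : ∀ x s, deriv (fun r => u x r) s = hsPT Uf (x, s) :=
    fun x s => (hsSliceT husmooth x s).deriv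
  have key_vt : ∀ x s, deriv (fun r => v x r) s = hsPT Vf (x, s) :=
    fun x s => (hsSliceT hvsmooth x s).deriv
  have hUt : ∀ s, hsPT Uf (xL, s) = hsPT Uf (xR, s) := by
    intro s
    rw [← key_ut xL s, ← key_ut xR s]
    exact congrFun (congrArg deriv (funext huper0)) s
  have hVt : ∀ s, hsPT Vf (xL, s) = hsPT Vf (xR, s) := by
    intro s
    rw [← key_vt xL s, ← key_vt xR s]
    exact congrFun (congrArg deriv (funext hvper0)) s
  have pdeU : ∀ p : ℝ × ℝ, hsPT Uf p
      = a * (hsPX (hsPX (hsPX Uf)) p + 6 * Uf p * hsPX Uf p) + 2 * b * Vf p * hsPX Vf p := by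
    rintro ⟨x, s⟩
    rw [← key_ut x s, ← key_u3 s x, ← key_u s x, ← key_v s x]
    exact hpdeu x s
  have pdeV : ∀ p : ℝ × ℝ, hsPT Vf p
      = -(hsPX (hsPX (hsPX Vf)) p) - 3 * Uf p * hsPX Vf p := by
    rintro ⟨x, s⟩
    rw [← key_vt x s, ← key_v3 s x, ← key_v s x]
    exact hpdev x s
  have hU1 : ∀ s, hsPX Uf (xL, s) = hsPX Uf (xR, s) := by
    intro s; rw [← key_u s xL, ← key_u s xR]; exact huper1 s
  have hV1 : ∀ s, hsPX Vf (xL, s) = hsPX Vf (xR, s) := by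
    intro s; rw [← key_v s xL, ← key_v s xR]; exact hvper1 s
  have hU2 : ∀ s, hsPX (hsPX Uf) (xL, s) = hsPX (hsPX Uf) (xR, s) := by
    intro s; rw [← key_u2 s xL, ← key_u2 s xR]; exact huper2 s
  have hV2 : ∀ s, hsPX (hsPX Vf) (xL, s) = hsPX (hsPX Vf) (xR, s) := by
    intro s; rw [← key_v2 s xL, ← key_v2 s xR]; exact hvper2 s
  have H := hskdv_aux xL xR a b Uf Vf husmooth hvsmooth huper0 hU1 hU2 hUt
    hvper0 hV1 hV2 hVt pdeU pdeV t
  simp only [key_u, key_v]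
  exact H.deriv
end
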